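/- Let f : (0,∞) → [0,∞) be measurable and antitone (nonincreasing), and let α > 0, β > 0. Then (1 − e^{-αβ}) · ∫₀^∞ e^{-αt} f(t) dt ≤ ∫₀^β f(t) dt. -/
import Mathlib


open MeasureTheory Real ENNReal

/-- If `f : (0,∞) → [0,∞)` is measurable and nonincreasing, then for `α, β > 0`,
`(1 - e^{-αβ}) · ∫₀^∞ e^{-αt} f(t) dt ≤ ∫₀^β f(t) dt` (integrals may be `+∞`). -/
theorem laplace_transform_le_initial_integral (f : ℝ → ℝ≥0∞) (hf : Measurable f)
    (hmono : AntitoneOn f (Set.Ioi 0)) (α β : ℝ) (hα : 0 < α) (hβ : 0 < β) :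
    ENNReal.ofReal (1 - Real.exp (-α * β)) *
        ∫⁻ t in Set.Ioi (0 : ℝ), ENNReal.ofReal (Real.exp (-α * t)) * f t ≤
      ∫⁻ t in Set.Ioo (0 : ℝ) β, f t := by
  set r := Real.exp (-α * β) with hr
  have hr0 : 0 < r := Real.exp_pos _
  have hr1 : r < 1 := by
    rw [hr, Real.exp_lt_one_iff]; nlinarith
  set C := ∫⁻ t in Set.Ioo (0:ℝ) β, f t with hC
  have hIoc : (∫⁻ t in Set.Ioc (0:ℝ) β, f t) = C := by
    rw [hC, Measure.restrict_congr_set MeasureTheory.Ioo_ae_eq_Ioc]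
  have hFmeas : Measurable fun t => ENNReal.ofReal (Real.exp (-α * t)) * f t := by
    fun_prop
  -- cover
  have hcover : Set.Ioi (0:ℝ) = ⋃ n : ℕ, Set.Ioc ((n:ℝ)*β) (((n:ℝ)+1)*β) := by
    ext t
    simp only [Set.mem_Ioi, Set.mem_iUnion, Set.mem_Ioc]
    constructor
    · intro ht
      have hk : 1 ≤ ⌈t/β⌉₊ := Nat.one_le_ceil_iff.mpr (div_pos ht hβ)
      refine ⟨⌈t/β⌉₊ - 1, ?_, ?_⟩
      · have h1 : ((⌈t/β⌉₊ - 1 : ℕ) : ℝ) < t / β := by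
          exact_mod_cast Nat.lt_ceil.mp (Nat.sub_lt (by omega) one_pos)
        calc ((⌈t/β⌉₊ - 1 : ℕ) : ℝ) * β < (t/β) * β := by
              exact mul_lt_mul_of_pos_right h1 hβ
          _ = t := div_mul_cancel₀ t hβ.ne'
      · have h2 : t / β ≤ (⌈t/β⌉₊ : ℝ) := Nat.le_ceil _
        have h3 : ((⌈t/β⌉₊ - 1 : ℕ) : ℝ) + 1 = (⌈t/β⌉₊ : ℝ) := by
          push_cast [hk]; ring
        rw [h3]
        calc t = (t/β) * β := (div_mul_cancel₀ t hβ.ne').symm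
          _ ≤ (⌈t/β⌉₊ : ℝ) * β := mul_le_mul_of_nonneg_right h2 hβ.le
    · rintro ⟨n, h1, h2⟩
      have : (0:ℝ) ≤ (n:ℝ) * β := by positivity
      linarith
  have hdisj : Pairwise (Function.onFun Disjoint
      fun n : ℕ => Set.Ioc ((n:ℝ)*β) (((n:ℝ)+1)*β)) := by
    intro i j hij
    have key : ∀ i j : ℕ, i < j → Disjoint (Set.Ioc ((i:ℝ)*β) (((i:ℝ)+1)*β))
        (Set.Ioc ((j:ℝ)*β) (((j:ℝ)+1)*β)) := by
      intro i j h
      apply Set.Ioc_disjoint_Ioc.mpr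
      have : (i:ℝ) + 1 ≤ j := by exact_mod_cast h
      calc min (((i:ℝ)+1)*β) (((j:ℝ)+1)*β) ≤ ((i:ℝ)+1)*β := min_le_left _ _
        _ ≤ (j:ℝ)*β := by nlinarith
        _ ≤ max ((i:ℝ)*β) ((j:ℝ)*β) := le_max_right _ _
    rcases hij.lt_or_gt with h | h
    · exact key i j h
    · exact (key j i h).symm
  -- per-interval bound
  have key : ∀ n : ℕ, (∫⁻ t in Set.Ioc ((n:ℝ)*β) (((n:ℝ)+1)*β),
      ENNReal.ofReal (Real.exp (-α * t)) * f t) ≤ ENNReal.ofReal (r^n) * C := by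
    intro n
    have hpre : ((· + (n:ℝ)*β) ⁻¹' Set.Ioc ((n:ℝ)*β) (((n:ℝ)+1)*β)) = Set.Ioc 0 β := by
      ext s
      simp only [Set.mem_preimage, Set.mem_Ioc]
      constructor <;> rintro ⟨h1, h2⟩ <;> constructor <;> nlinarith
    have htrans := (measurePreserving_add_right volume ((n:ℝ)*β)).setLIntegral_comp_preimage
      (s := Set.Ioc ((n:ℝ)*β) (((n:ℝ)+1)*β)) measurableSet_Ioc hFmeas
    rw [← htrans, hpre, ← hIoc]
    calc (∫⁻ s in Set.Ioc (0:ℝ) β, ENNReal.ofReal (Real.exp (-α * (s + (n:ℝ)*β))) * f (s + (n:ℝ)*β))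
        ≤ ∫⁻ s in Set.Ioc (0:ℝ) β, ENNReal.ofReal (r^n) * f s := by
          apply setLIntegral_mono' measurableSet_Ioc
          intro s hs
          apply mul_le_mul'
          · apply ENNReal.ofReal_le_ofReal
            have : Real.exp (-α * (s + (n:ℝ)*β)) = Real.exp (-α*s) * r^n := by
              rw [hr, ← Real.exp_nat_mul, ← Real.exp_add]
              ring_nf
            rw [this]
            calc Real.exp (-α*s) * r^n ≤ 1 * r^n := by
                  apply mul_le_mul_of_nonneg_right _ (by positivity)
                  apply Real.exp_le_one_iff.mpr
                  nlinarith [hs.1]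
              _ = r^n := one_mul _
          · apply hmono
            · exact Set.mem_Ioi.mpr hs.1
            · have : (0:ℝ) ≤ (n:ℝ)*β := by positivity
              exact Set.mem_Ioi.mpr (by linarith [hs.1])
            · have : (0:ℝ) ≤ (n:ℝ)*β := by positivity
              linarith
      _ = ENNReal.ofReal (r^n) * ∫⁻ s in Set.Ioc (0:ℝ) β, f s := lintegral_const_mul _ hf
  -- assemble
  rw [hcover, lintegral_iUnion (fun n => measurableSet_Ioc) hdisj]
  calc ENNReal.ofReal (1 - r) * ∑' n : ℕ, (∫⁻ t in Set.Ioc ((n:ℝ)*β) (((n:ℝ)+1)*β),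
        ENNReal.ofReal (Real.exp (-α * t)) * f t)
      ≤ ENNReal.ofReal (1 - r) * ∑' n : ℕ, ENNReal.ofReal (r^n) * C := by
        gcongr with n; exact key n
    _ = ENNReal.ofReal (1 - r) * ((∑' n : ℕ, (ENNReal.ofReal r)^n) * C) := by
        rw [ENNReal.tsum_mul_right]
        congr 2
        exact tsum_congr fun n => ENNReal.ofReal_pow hr0.le n
    _ = ENNReal.ofReal (1 - r) * ((1 - ENNReal.ofReal r)⁻¹ * C) := by
        rw [ENNReal.tsum_geometric]
    _ = C := by
        rw [← mul_assoc, ENNReal.ofReal_sub _ hr0.le, ENNReal.ofReal_one,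
          ENNReal.mul_inv_cancel ?h0 ?htop, one_mul]
        case h0 =>
          simp only [ne_eq, tsub_eq_zero_iff_le, not_le]
          exact ENNReal.ofReal_lt_one.mpr hr1
        case htop =>
          exact (tsub_le_self.trans_lt ENNReal.one_lt_top).ne
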